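/- Let 1 ≤ j < i ≤ n and 1 ≤ k ≤ i−j. Then the length of the permutation w_k^{(i,j)} equals i − j, i.e., the number of pairs (r, s) with r < s and w_k^{(i,j)}(r) > w_k^{(i,j)}(s) is exactly i − j. In particular, the expression (s_{i−k} s_{i−k−1} ⋯ s_j)(s_{i−k+1} s_{i−k+2} ⋯ s_{i−1}) is a reduced expression for w_k^{(i,j)}. -/

import Mathlib

open MvPolynomial Finset

/-- The product of simple transpositions `s_a s_{a-1} ⋯ s_b` (descending indices),
where `s_r` interchanges `r` and `r+1`; the empty product (when `a < b`) is the identity. -/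
def sdesc (a b : ℕ) : Equiv.Perm ℕ :=
  (((List.range' b (a + 1 - b)).reverse).map (fun r => Equiv.swap r (r + 1))).prod

/-- The product of simple transpositions `s_a s_{a+1} ⋯ s_b` (ascending indices);
the empty product (when `b < a`) is the identity. -/
def sasc (a b : ℕ) : Equiv.Perm ℕ :=
  ((List.range' a (b + 1 - a)).map (fun r => Equiv.swap r (r + 1))).prod

/-- The permutation `w_k^{(i,j)} = (s_{i-k} s_{i-k-1} ⋯ s_j)(s_{i-k+1} s_{i-k+2} ⋯ s_{i-1})`,
regarded as a permutation of `ℕ` (supported on `{1, …, n}`). -/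
def wkij (i j k : ℕ) : Equiv.Perm ℕ := sdesc (i - k) j * sasc (i - k + 1) (i - 1)

/-! `w_k^{(i,j)}` moves `j` up to `i-k+1` and `i` down to `i-k`, shifting the two blocks in between
by one. Hence its inversions are exactly the pairs `(j, s)` with `j < s ≤ i-k`, the pairs
`(r, i)` with `i-k < r < i`, and `(j, i)`: `(i-k-j) + (k-1) + 1 = i-j` of them. -/

theorem prod_map_swap_range'_apply (a m x : ℕ) :
    ((List.range' a m).map (fun r => Equiv.swap r (r + 1))).prod x =
      if x = a + m then a else if a ≤ x ∧ x < a + m then x + 1 else x := by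
  induction m generalizing x with
  | zero =>
    simp only [List.range'_zero, List.map_nil, List.prod_nil, Equiv.Perm.one_apply]
    split_ifs <;> omega
  | succ m ih =>
    simp only [List.range'_concat, List.map_append, List.prod_append, List.map_cons,
      List.map_nil, List.prod_cons, List.prod_nil, mul_one, Equiv.Perm.mul_apply,
      Equiv.swap_apply_def]
    split_ifs <;> rw [ih] <;> split_ifs <;> omega

theorem prod_map_swap_reverse_range'_apply (b m x : ℕ) :
    ((List.range' b m).reverse.map (fun r => Equiv.swap r (r + 1))).prod x =
      if x = b ∧ 0 < m then b + m else if b < x ∧ x ≤ b + m then x - 1 else x := by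
  induction m generalizing x with
  | zero => simp
  | succ m ih =>
    simp only [List.range'_concat, List.reverse_append, List.reverse_cons, List.reverse_nil,
      List.nil_append, List.map_append, List.map_cons, List.map_nil, List.prod_append,
      List.prod_cons, List.prod_nil, mul_one, Equiv.Perm.mul_apply]
    rw [ih, Equiv.swap_apply_def]
    split_ifs <;> omega

theorem wkij_apply {i j k : ℕ} (hk1 : 1 ≤ k) (hk : k ≤ i - j) (x : ℕ) :
    wkij i j k x =
      if x = j then i - k + 1
      else if j < x ∧ x ≤ i - k then x - 1
      else if x = i then i - k
      else if i - k < x ∧ x < i then x + 1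
      else x := by
  rw [wkij, Equiv.Perm.mul_apply, sdesc, sasc, prod_map_swap_range'_apply,
    prod_map_swap_reverse_range'_apply, show i - k + 1 + (i - 1 + 1 - (i - k + 1)) = i by omega,
    show j + (i - k + 1 - j) = i - k + 1 by omega]
  split_ifs <;> omega

theorem wkij_inversions {n i j k : ℕ} (hj : 1 ≤ j) (hin : i ≤ n) (hk1 : 1 ≤ k)
    (hk : k ≤ i - j) :
    (Icc 1 n ×ˢ Icc 1 n).filter (fun p => p.1 < p.2 ∧ wkij i j k p.2 < wkij i j k p.1) =
      {j} ×ˢ Ioc j (i - k) ∪ insert j (Ioo (i - k) i) ×ˢ {i} := by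
  ext ⟨r, s⟩
  simp only [mem_filter, mem_product, mem_Icc, mem_union, mem_insert, mem_singleton, mem_Ioc,
    mem_Ioo, wkij_apply hk1 hk]
  split_ifs <;> omega

theorem card_wkij_inversions {n i j k : ℕ} (hj : 1 ≤ j) (hin : i ≤ n)
    (hk1 : 1 ≤ k) (hk : k ≤ i - j) :
    #((Icc 1 n ×ˢ Icc 1 n).filter
        (fun p => p.1 < p.2 ∧ wkij i j k p.2 < wkij i j k p.1)) = i - j := by
  have hdisj : Disjoint ({j} ×ˢ Ioc j (i - k)) (insert j (Ioo (i - k) i) ×ˢ {i}) := by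
    simp only [disjoint_left, mem_product, mem_singleton, mem_Ioc, mem_insert, mem_Ioo]
    omega
  have hj_notMem : j ∉ Ioo (i - k) i := by simp only [mem_Ioo]; omega
  rw [wkij_inversions hj hin hk1 hk, card_union_of_disjoint hdisj, card_product,
    card_product, card_insert_of_notMem hj_notMem, card_singleton, card_singleton,
    Nat.card_Ioc, Nat.card_Ioo]
  omega

theorem stmt14_general (n i j k : ℕ) (hj : 1 ≤ j) (hin : i ≤ n)
    (hk1 : 1 ≤ k) (hk : k ≤ i - j) :
    ((Finset.Icc 1 n ×ˢ Finset.Icc 1 n).filter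
        (fun p => p.1 < p.2 ∧ wkij i j k p.2 < wkij i j k p.1)).card = i - j ∧
    (i - k + 1 - j) + (i - 1 + 1 - (i - k + 1)) = i - j :=
  ⟨card_wkij_inversions hj hin hk1 hk, by omega⟩

/-- length of `w_k^{(i,j)}`.  For `1 ≤ j < i ≤ n` and `1 ≤ k ≤ i-j`,
the length of `w_k^{(i,j)}` equals `i - j`: the number of pairs `(r,s)` with `r < s`
and `w_k^{(i,j)}(r) > w_k^{(i,j)}(s)` is exactly `i - j`.  In particular, since the
defining expression `(s_{i-k} ⋯ s_j)(s_{i-k+1} ⋯ s_{i-1})` consists of exactly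
`i - j` simple transpositions, it is a reduced expression for `w_k^{(i,j)}`. -/
theorem stmt14 (n i j k : ℕ) (hj : 1 ≤ j) (hji : j < i) (hin : i ≤ n)
    (hk1 : 1 ≤ k) (hk : k ≤ i - j) :
    ((Finset.Icc 1 n ×ˢ Finset.Icc 1 n).filter
        (fun p => p.1 < p.2 ∧ wkij i j k p.2 < wkij i j k p.1)).card = i - j ∧
    (i - k + 1 - j) + (i - 1 + 1 - (i - k + 1)) = i - j :=
  stmt14_general n i j k hj hin hk1 hk
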